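/- arXiv:2605.12679 — 2 statements merged into one kernel-verified Lean document; each statement's English description precedes it below -/
import Mathlib

section
/- Under the same assumptions, ABC²(Y,X) := ∫₀¹ (CC_p − LC_p)² dp admits the representation ABC²(Y,X) = E[(Y−X)(Y'−X')(1 − max{F_X(X), F_X(X')})] / E[Y]², where (Y',X') is an independent copy of (Y,X). -/
open MeasureTheory ProbabilityTheory

/-- Distribution function of `X` under `μ`. -/
noncomputable def cdf' {Ω : Type*} [MeasurableSpace Ω] (μ : Measure Ω) (X : Ω → ℝ) :
    ℝ → ℝ :=
  fun t => (μ {ω | X ω ≤ t}).toReal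

/-- Generalized inverse (quantile function) of the cdf of `X`. -/
noncomputable def quantile {Ω : Type*} [MeasurableSpace Ω] (μ : Measure Ω) (X : Ω → ℝ)
    (p : ℝ) : ℝ :=
  sInf {x : ℝ | p ≤ cdf' μ X x}

/-- Lorenz curve `LC_p(X) = E[X·1{X ≤ F_X⁻¹(p)}] / E[X]`. -/
noncomputable def LC {Ω : Type*} [MeasurableSpace Ω] (μ : Measure Ω) (X : Ω → ℝ)
    (p : ℝ) : ℝ :=
  (∫ ω in {ω | X ω ≤ quantile μ X p}, X ω ∂μ) / ∫ ω, X ω ∂μ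

/-- Concentration curve `CC_p(Y,X) = E[Y·1{X ≤ F_X⁻¹(p)}] / E[Y]`. -/
noncomputable def CC {Ω : Type*} [MeasurableSpace Ω] (μ : Measure Ω) (Y X : Ω → ℝ)
    (p : ℝ) : ℝ :=
  (∫ ω in {ω | X ω ≤ quantile μ X p}, Y ω ∂μ) / ∫ ω, Y ω ∂μ

/-!
Writing `Z = Y - X`, the equality of means gives `CC_p - LC_p = E[Z·1{F_X(X) ≤ p}] / E[Y]` for
`0 < p < 1`, because `X ≤ F_X⁻¹(p) ↔ F_X(X) ≤ p`. The square of an expectation is the expectation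
of the product over an independent copy, and `1{F_X(X) ≤ p}·1{F_X(X') ≤ p} = 1{max ≤ p}`;
integrating over `p ∈ (0,1)` and exchanging the integrals (Fubini) turns this indicator into
`1 - max{F_X(X), F_X(X')}`.
-/

open Set Filter Topology

section Quantile

variable {Ω : Type*} {m0 : MeasurableSpace Ω} {μ : Measure Ω} {X : Ω → ℝ}

lemma cdf'_nonneg (t : ℝ) : 0 ≤ cdf' μ X t := ENNReal.toReal_nonneg

lemma cdf'_le_one [IsProbabilityMeasure μ] (t : ℝ) : cdf' μ X t ≤ 1 := measureReal_le_one

lemma cdf'_eq_cdf_map [IsProbabilityMeasure μ] (hX : Measurable X) :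
    cdf' μ X = cdf (μ.map X) := by
  ext t
  have := Measure.isProbabilityMeasure_map (μ := μ) hX.aemeasurable
  rw [cdf_eq_real, measureReal_def, Measure.map_apply hX measurableSet_Iic]
  rfl

lemma monotone_cdf' [IsProbabilityMeasure μ] (hX : Measurable X) : Monotone (cdf' μ X) := by
  rw [cdf'_eq_cdf_map hX]
  exact monotone_cdf _

lemma tendsto_cdf'_atTop [IsProbabilityMeasure μ] (hX : Measurable X) :
    Tendsto (cdf' μ X) atTop (𝓝 1) := by
  rw [cdf'_eq_cdf_map hX]
  exact tendsto_cdf_atTop _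

lemma le_quantile_iff [IsProbabilityMeasure μ] (hX : Measurable X)
    (hFcont : Continuous (cdf' μ X)) (hFmono : StrictMonoOn (cdf' μ X) (Ici 0))
    (hF0 : cdf' μ X 0 = 0) {p : ℝ} (hp : p ∈ Ioo (0 : ℝ) 1) (x : ℝ) :
    x ≤ quantile μ X p ↔ cdf' μ X x ≤ p := by
  set F := cdf' μ X
  have hne : {y | p ≤ F y}.Nonempty :=
    ((tendsto_cdf'_atTop hX).eventually (eventually_ge_nhds hp.2)).exists
  have hbdd : 0 ∈ lowerBounds {y | p ≤ F y} := fun y hy =>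
    not_lt.1 fun hy0 => (hp.1.trans_le hy).not_ge ((monotone_cdf' hX hy0.le).trans hF0.le)
  constructor
  · intro hx
    by_contra! hpx
    obtain ⟨y, hyx, hpy⟩ := (hFcont.continuousAt.eventually (lt_mem_nhds hpx)).exists_lt
    exact hyx.not_ge (hx.trans (csInf_le ⟨0, hbdd⟩ hpy.le))
  · intro hxp
    refine le_csInf hne fun y hy => ?_
    by_contra! hyx
    have hy0 : 0 ≤ y := hbdd hy
    exact (hFmono hy0 (hy0.trans hyx.le) hyx).not_ge (hxp.trans hy)

lemma CC_sub_LC_eq [IsProbabilityMeasure μ] {Y : Ω → ℝ} (hX : Measurable X)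
    (hY : Integrable Y μ) (hXint : Integrable X μ) (hmean : ∫ ω, Y ω ∂μ = ∫ ω, X ω ∂μ)
    (hFcont : Continuous (cdf' μ X)) (hFmono : StrictMonoOn (cdf' μ X) (Ici 0))
    (hF0 : cdf' μ X 0 = 0) {p : ℝ} (hp : p ∈ Ioo (0 : ℝ) 1) :
    CC μ Y X p - LC μ X p
      = (∫ ω in {ω | cdf' μ X (X ω) ≤ p}, (Y ω - X ω) ∂μ) / ∫ ω, Y ω ∂μ := by
  have hset : {ω | X ω ≤ quantile μ X p} = {ω | cdf' μ X (X ω) ≤ p} :=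
    Set.ext fun ω => le_quantile_iff hX hFcont hFmono hF0 hp (X ω)
  rw [CC, LC, hset, ← hmean, div_sub_div_same,
    integral_sub hY.integrableOn hXint.integrableOn]

end Quantile

lemma sq_integral_eq_integral_mul_of_identDistrib_of_indepFun {Ω β : Type*}
    {m0 : MeasurableSpace Ω} {μ : Measure Ω} [MeasurableSpace β] {V V' : Ω → β}
    (hcopy : IdentDistrib V V' μ μ) (hindep : IndepFun V V' μ) {φ : β → ℝ} (hφ : Measurable φ) :
    (∫ ω, φ (V ω) ∂μ) ^ 2 = ∫ ω, φ (V ω) * φ (V' ω) ∂μ := by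
  have hV := (hφ.comp_aemeasurable hcopy.aemeasurable_fst).aestronglyMeasurable
  have hV' := (hφ.comp_aemeasurable hcopy.aemeasurable_snd).aestronglyMeasurable
  have hmul := (hindep.comp hφ hφ).integral_fun_mul_eq_mul_integral hV hV'
  simp only [Function.comp_apply] at hmul
  rw [hmul, sq]
  congr 1
  exact (hcopy.comp hφ).integral_eq

lemma intervalIntegral_indicator_Ici {m : ℝ} (hm0 : 0 ≤ m) (hm1 : m ≤ 1) (c : ℝ) :
    ∫ p in (0 : ℝ)..1, (Ici m).indicator (fun _ => c) p = (1 - m) * c := by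
  have hvol : volume (Ici m ∩ Ioc 0 1) = volume (Ioc m 1) := by
    rw [measure_congr (Ioi_ae_eq_Ici.symm.inter (ae_eq_refl (Ioc (0 : ℝ) 1))),
      inter_comm, Ioc_inter_Ioi, sup_eq_right.2 hm0]
  rw [intervalIntegral.integral_of_le zero_le_one, integral_indicator_const _ measurableSet_Ici,
    measureReal_restrict_apply measurableSet_Ici, measureReal_def, hvol, ← measureReal_def,
    Real.volume_real_Ioc_of_le hm1, smul_eq_mul]

lemma intervalIntegral_setIntegral_le_eq_integral_mul_one_sub {Ω : Type*}
    {m0 : MeasurableSpace Ω} {μ : Measure Ω} [SFinite μ] {g T : Ω → ℝ} (hg : Integrable g μ)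
    (hT : Measurable T) (hT0 : ∀ ω, 0 ≤ T ω) (hT1 : ∀ ω, T ω ≤ 1) :
    ∫ p in (0 : ℝ)..1, ∫ ω in {ω | T ω ≤ p}, g ω ∂μ = ∫ ω, g ω * (1 - T ω) ∂μ := by
  set G : ℝ → Ω → ℝ := fun p ω => (Ici (T ω)).indicator (fun _ => g ω) p
  have hG : ∀ p, ∫ ω in {ω | T ω ≤ p}, g ω ∂μ = ∫ ω, G p ω ∂μ := fun p => by
    rw [← integral_indicator (measurableSet_le hT measurable_const)]
    rfl
  have hGint : Integrable (Function.uncurry G) ((volume.restrict (Ioc (0 : ℝ) 1)).prod μ) := by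
    refine (hg.comp_snd _).mono ?_ (ae_of_all _ fun q => ?_)
    · have hS : MeasurableSet {q : ℝ × Ω | T q.2 ≤ q.1} :=
        measurableSet_le (hT.comp measurable_snd) measurable_fst
      refine ((hg.aestronglyMeasurable.comp_snd).indicator hS).congr (ae_of_all _ fun q => ?_)
      simp [G, Function.uncurry, Set.indicator_apply]
    · simp only [Function.uncurry, G]
      exact norm_indicator_le_norm_self _ _
  simp_rw [hG]
  rw [intervalIntegral.integral_of_le zero_le_one, integral_integral_swap hGint]
  congr 1 with ω
  rw [← intervalIntegral.integral_of_le zero_le_one, intervalIntegral_indicator_Ici (hT0 ω) (hT1 ω),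
    mul_comm]

lemma sq_CC_sub_LC_eq_setIntegral_max_le {Ω : Type*} {m0 : MeasurableSpace Ω} {μ : Measure Ω}
    [IsProbabilityMeasure μ] {Y X Y' X' : Ω → ℝ} (hX : Measurable X) (hX' : Measurable X')
    (hY : Integrable Y μ) (hXint : Integrable X μ) (hmean : ∫ ω, Y ω ∂μ = ∫ ω, X ω ∂μ)
    (hFcont : Continuous (cdf' μ X)) (hFmono : StrictMonoOn (cdf' μ X) (Ici 0))
    (hF0 : cdf' μ X 0 = 0)
    (hcopy : IdentDistrib (fun ω => (Y ω, X ω)) (fun ω => (Y' ω, X' ω)) μ μ)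
    (hindep : IndepFun (fun ω => (Y ω, X ω)) (fun ω => (Y' ω, X' ω)) μ)
    {p : ℝ} (hp : p ∈ Ioo (0 : ℝ) 1) :
    (CC μ Y X p - LC μ X p) ^ 2
      = (∫ ω in {ω | max (cdf' μ X (X ω)) (cdf' μ X (X' ω)) ≤ p},
          (Y ω - X ω) * (Y' ω - X' ω) ∂μ) / (∫ ω, Y ω ∂μ) ^ 2 := by
  have hF : Measurable (cdf' μ X) := hFcont.measurable
  set φ : ℝ × ℝ → ℝ := {v | cdf' μ X v.2 ≤ p}.indicator fun v => v.1 - v.2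
  have hφ : Measurable φ := (measurable_fst.sub measurable_snd).indicator
    (measurableSet_le (hF.comp measurable_snd) measurable_const)
  have hφV : ∫ ω in {ω | cdf' μ X (X ω) ≤ p}, (Y ω - X ω) ∂μ = ∫ ω, φ (Y ω, X ω) ∂μ := by
    have hS : MeasurableSet {ω | cdf' μ X (X ω) ≤ p} :=
      measurableSet_le (hF.comp hX) measurable_const
    rw [← integral_indicator hS]
    rfl
  have hφVV' : ∫ ω in {ω | max (cdf' μ X (X ω)) (cdf' μ X (X' ω)) ≤ p},
      (Y ω - X ω) * (Y' ω - X' ω) ∂μ = ∫ ω, φ (Y ω, X ω) * φ (Y' ω, X' ω) ∂μ := by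
    have hS : MeasurableSet {ω | max (cdf' μ X (X ω)) (cdf' μ X (X' ω)) ≤ p} :=
      measurableSet_le ((hF.comp hX).max (hF.comp hX')) measurable_const
    rw [← integral_indicator hS]
    congr 1 with ω
    by_cases hXω : cdf' μ X (X ω) ≤ p <;> by_cases hX'ω : cdf' μ X (X' ω) ≤ p <;>
      simp [φ, hXω, hX'ω]
  rw [CC_sub_LC_eq hX hY hXint hmean hFcont hFmono hF0 hp, div_pow, hφV, hφVV',
    sq_integral_eq_integral_mul_of_identDistrib_of_indepFun hcopy hindep hφ]

theorem abc_sq_representation_general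
    {Ω : Type*} {m0 : MeasurableSpace Ω} (μ : Measure Ω) [IsProbabilityMeasure μ]
    (Y X Y' X' : Ω → ℝ) (hX : Measurable X) (hX' : Measurable X')
    (hY : Integrable Y μ) (hXint : Integrable X μ)
    (hmean : ∫ ω, Y ω ∂μ = ∫ ω, X ω ∂μ)
    (hFcont : Continuous (cdf' μ X)) (hFmono : StrictMonoOn (cdf' μ X) (Set.Ici 0))
    (hF0 : cdf' μ X 0 = 0)
    (hcopy : IdentDistrib (fun ω => (Y ω, X ω)) (fun ω => (Y' ω, X' ω)) μ μ)
    (hindep : IndepFun (fun ω => (Y ω, X ω)) (fun ω => (Y' ω, X' ω)) μ) :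
    ∫ p in (0:ℝ)..1, (CC μ Y X p - LC μ X p) ^ 2
      = (∫ ω, (Y ω - X ω) * (Y' ω - X' ω)
            * (1 - max (cdf' μ X (X ω)) (cdf' μ X (X' ω))) ∂μ)
        / (∫ ω, Y ω ∂μ) ^ 2 := by
  have hF : Measurable (cdf' μ X) := hFcont.measurable
  have hsub : Measurable fun v : ℝ × ℝ => v.1 - v.2 := measurable_fst.sub measurable_snd
  have hT : Measurable fun ω => max (cdf' μ X (X ω)) (cdf' μ X (X' ω)) :=
    (hF.comp hX).max (hF.comp hX')
  have hZZ' : Integrable (fun ω => (Y ω - X ω) * (Y' ω - X' ω)) μ :=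
    (hindep.comp hsub hsub).integrable_mul (hY.sub hXint)
      ((hcopy.comp hsub).integrable_iff.mp (hY.sub hXint))
  calc ∫ p in (0 : ℝ)..1, (CC μ Y X p - LC μ X p) ^ 2
      = ∫ p in (0 : ℝ)..1, (∫ ω in {ω | max (cdf' μ X (X ω)) (cdf' μ X (X' ω)) ≤ p},
          (Y ω - X ω) * (Y' ω - X' ω) ∂μ) / (∫ ω, Y ω ∂μ) ^ 2 := by
        simp only [intervalIntegral.integral_of_le zero_le_one, integral_Ioc_eq_integral_Ioo]
        exact setIntegral_congr_fun measurableSet_Ioo fun p hp =>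
          sq_CC_sub_LC_eq_setIntegral_max_le hX hX' hY hXint hmean hFcont hFmono hF0 hcopy hindep hp
    _ = _ := by
      rw [intervalIntegral.integral_div, intervalIntegral_setIntegral_le_eq_integral_mul_one_sub
        hZZ' hT (fun ω => (cdf'_nonneg _).trans (le_max_left _ _))
        (fun ω => max_le (cdf'_le_one _) (cdf'_le_one _))]

/-- representation of `ABC²(Y,X)` in terms of an independent copy
`(Y',X')` of `(Y,X)`:
`ABC² = E[(Y−X)(Y'−X')(1 − max{F_X(X), F_X(X')})] / E[Y]²`. -/
theorem abc_sq_representation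
    {Ω : Type*} {m0 : MeasurableSpace Ω} (μ : Measure Ω) [IsProbabilityMeasure μ]
    (Y X Y' X' : Ω → ℝ) (hX : Measurable X) (hX' : Measurable X')
    (hY : Integrable Y μ) (hXint : Integrable X μ)
    (hY0 : 0 ≤ᵐ[μ] Y) (hX0 : 0 ≤ᵐ[μ] X)
    (hmean : ∫ ω, Y ω ∂μ = ∫ ω, X ω ∂μ) (hpos : 0 < ∫ ω, Y ω ∂μ)
    (hFcont : Continuous (cdf' μ X)) (hFmono : StrictMonoOn (cdf' μ X) (Set.Ici 0))
    (hF0 : cdf' μ X 0 = 0)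
    (hcopy : IdentDistrib (fun ω => (Y ω, X ω)) (fun ω => (Y' ω, X' ω)) μ μ)
    (hindep : IndepFun (fun ω => (Y ω, X ω)) (fun ω => (Y' ω, X' ω)) μ)
    (hint : Integrable
      (fun ω => (Y ω - X ω) * (Y' ω - X' ω)
        * (1 - max (cdf' μ X (X ω)) (cdf' μ X (X' ω)))) μ) :
    ∫ p in (0:ℝ)..1, (CC μ Y X p - LC μ X p) ^ 2
      = (∫ ω, (Y ω - X ω) * (Y' ω - X' ω)
            * (1 - max (cdf' μ X (X ω)) (cdf' μ X (X' ω))) ∂μ)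
        / (∫ ω, Y ω ∂μ) ^ 2 :=
  abc_sq_representation_general (m0 := m0) μ Y X Y' X' hX hX' hY hXint hmean hFcont hFmono hF0 hcopy
    hindep
end

section
/- Let X₁, X₂ be mean-calibrated predictors of Y (E[Y|Xᵢ]=Xᵢ a.s.) supported on [0,∞) with E[X₁]=E[X₂]=E[Y]. Then the Murphy-curve difference satisfies E[L_θ(Y,X₁)] − E[L_θ(Y,X₂)] = E[(X₂−θ)⁺] − E[(X₁−θ)⁺] = −∫₀^θ (F_{X₁}(x) − F_{X₂}(x)) dx for all θ ≥ 0. -/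
open MeasureTheory ProbabilityTheory

/-- The elementary Bregman loss. -/
noncomputable def elemLoss (θ y x : ℝ) : ℝ :=
  max (y - θ) 0 - max (x - θ) 0 - (if θ < x then y - x else 0)

/-!
Calibration `E[Y | X] = X` means that `Y` and `X` have the same integral over every event
`{X ∈ B}`. With `B = (θ, ∞)` this kills the correction term `1{X > θ}(Y - X)` of the elementary
loss, so `E[L_θ(Y, X)] = E[(Y - θ)⁺] - E[(X - θ)⁺]`, and `E[X] = E[Y]`. For the second
identity write `(X - θ)⁺ = X - min X θ` and evaluate `E[min X θ] = ∫₀^θ (1 - F_X)`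
by the layer cake formula, valid since `X ≥ 0`.
-/

section Calibration

variable {Ω : Type*} {m0 : MeasurableSpace Ω} {μ : Measure Ω} [IsFiniteMeasure μ]
  {X Y : Ω → ℝ}

theorem setIntegral_preimage_eq_of_condExp_comap_ae_eq (hX : Measurable X) (hY : Integrable Y μ)
    (hcal : μ[Y | MeasurableSpace.comap X Real.measurableSpace] =ᵐ[μ] X)
    {B : Set ℝ} (hB : MeasurableSet B) :
    ∫ ω in X ⁻¹' B, Y ω ∂μ = ∫ ω in X ⁻¹' B, X ω ∂μ := by
  rw [← setIntegral_condExp hX.comap_le hY ⟨B, hB, rfl⟩]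
  exact setIntegral_congr_ae (hX hB) (hcal.mono fun ω hω _ => hω)

theorem integral_eq_of_condExp_comap_ae_eq (hX : Measurable X)
    (hcal : μ[Y | MeasurableSpace.comap X Real.measurableSpace] =ᵐ[μ] X) :
    ∫ ω, X ω ∂μ = ∫ ω, Y ω ∂μ := by
  rw [← integral_congr_ae hcal, integral_condExp hX.comap_le]

theorem integral_elemLoss_of_condExp_comap_ae_eq (hX : Measurable X) (hY : Integrable Y μ)
    (hXint : Integrable X μ)
    (hcal : μ[Y | MeasurableSpace.comap X Real.measurableSpace] =ᵐ[μ] X) (θ : ℝ) :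
    ∫ ω, elemLoss θ (Y ω) (X ω) ∂μ
      = (∫ ω, max (Y ω - θ) 0 ∂μ) - ∫ ω, max (X ω - θ) 0 ∂μ := by
  have hcorr : (fun ω => if θ < X ω then Y ω - X ω else 0)
      = (X ⁻¹' Set.Ioi θ).indicator (fun ω => Y ω - X ω) := by
    ext ω
    simp only [Set.indicator, Set.mem_preimage, Set.mem_Ioi]
  have hcorr_zero : ∫ ω, (if θ < X ω then Y ω - X ω else 0) ∂μ = 0 := by
    rw [hcorr, integral_indicator (hX measurableSet_Ioi),
      integral_sub hY.integrableOn hXint.integrableOn,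
      setIntegral_preimage_eq_of_condExp_comap_ae_eq hX hY hcal measurableSet_Ioi, sub_self]
  have hYθ : Integrable (fun ω => max (Y ω - θ) 0) μ := (hY.sub (integrable_const θ)).pos_part
  have hXθ : Integrable (fun ω => max (X ω - θ) 0) μ := (hXint.sub (integrable_const θ)).pos_part
  have hdiff : Integrable (fun ω => max (Y ω - θ) 0 - max (X ω - θ) 0) μ := hYθ.sub hXθ
  have hcorr_int : Integrable (fun ω => if θ < X ω then Y ω - X ω else 0) μ := by
    rw [hcorr]
    exact (hY.sub hXint).indicator (hX measurableSet_Ioi)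
  simp only [elemLoss]
  rw [integral_sub hdiff hcorr_int, integral_sub hYθ hXθ, hcorr_zero, sub_zero]

end Calibration

theorem monotone_cdf'_s10 {Ω : Type*} [MeasurableSpace Ω] (μ : Measure Ω) [IsFiniteMeasure μ]
    (X : Ω → ℝ) : Monotone (cdf' μ X) :=
  fun _ _ hst => ENNReal.toReal_mono (measure_ne_top μ _)
    (measure_mono fun _ hω => le_trans hω hst)

section LayerCake

variable {Ω : Type*} {m0 : MeasurableSpace Ω} (μ : Measure Ω) [IsProbabilityMeasure μ]
  {X : Ω → ℝ}

theorem measureReal_lt_min_eq_one_sub_cdf' (hX : Measurable X) {t θ : ℝ} (ht : t < θ) :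
    μ.real {ω | t < min (X ω) θ} = 1 - cdf' μ X t := by
  have hset : {ω | t < min (X ω) θ} = {ω | X ω ≤ t}ᶜ := by
    ext ω
    simp [ht]
  rw [hset, probReal_compl_eq_one_sub (measurableSet_le hX measurable_const)]
  rfl

theorem integral_min_eq_sub_intervalIntegral_cdf' (hX : Measurable X) (hX0 : 0 ≤ᵐ[μ] X)
    {θ : ℝ} (hθ : 0 ≤ θ) :
    ∫ ω, min (X ω) θ ∂μ = θ - ∫ t in (0:ℝ)..θ, cdf' μ X t := by
  have hmin0 : 0 ≤ᵐ[μ] fun ω => min (X ω) θ := hX0.mono fun ω hω => le_min hω hθ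
  have hmin_int : Integrable (fun ω => min (X ω) θ) μ :=
    .of_bound (hX.min measurable_const).aestronglyMeasurable θ <| hX0.mono fun ω hω => by
      rw [Real.norm_of_nonneg (le_min hω hθ)]
      exact min_le_right _ _
  have htail : ∀ t ∈ Set.Ioi (0:ℝ), μ.real {ω | t < min (X ω) θ}
      = (Set.Iio θ).indicator (fun t => 1 - cdf' μ X t) t := by
    intro t _
    by_cases htθ : t < θ
    · rw [Set.indicator_of_mem (Set.mem_Iio.2 htθ), measureReal_lt_min_eq_one_sub_cdf' μ hX htθ]
    · have hempty : {ω | t < min (X ω) θ} = ∅ := by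
        ext ω
        simp [not_lt.1 htθ]
      rw [Set.indicator_of_notMem (mt Set.mem_Iio.1 htθ), hempty, measureReal_empty]
  rw [hmin_int.integral_eq_integral_meas_lt hmin0, setIntegral_congr_fun measurableSet_Ioi htail,
    setIntegral_indicator measurableSet_Iio, Set.Ioi_inter_Iio, ← integral_Ioc_eq_integral_Ioo,
    ← intervalIntegral.integral_of_le hθ,
    intervalIntegral.integral_sub intervalIntegrable_const (monotone_cdf'_s10 μ X).intervalIntegrable]
  simp

theorem integral_max_sub_zero_eq (hX : Measurable X) (hXint : Integrable X μ)
    (hX0 : 0 ≤ᵐ[μ] X) {θ : ℝ} (hθ : 0 ≤ θ) :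
    ∫ ω, max (X ω - θ) 0 ∂μ = (∫ ω, X ω ∂μ) - θ + ∫ t in (0:ℝ)..θ, cdf' μ X t := by
  have hpos : (fun ω => max (X ω - θ) 0) = fun ω => X ω - min (X ω) θ := by
    ext ω
    rw [← max_sub_sub_left, sub_self, max_comm]
  rw [hpos, integral_sub hXint (g := fun ω => min (X ω) θ) (hXint.inf (integrable_const θ)), integral_min_eq_sub_intervalIntegral_cdf' μ hX hX0 hθ]
  ring

end LayerCake

theorem murphy_difference_of_mean_calibrated_general
    {Ω : Type*} {m0 : MeasurableSpace Ω} (μ : Measure Ω) [IsProbabilityMeasure μ]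
    (Y X₁ X₂ : Ω → ℝ) (hX₁ : Measurable X₁) (hX₂ : Measurable X₂)
    (hY : Integrable Y μ) (hX₁int : Integrable X₁ μ) (hX₂int : Integrable X₂ μ)
    (hX₁0 : 0 ≤ᵐ[μ] X₁) (hX₂0 : 0 ≤ᵐ[μ] X₂)
    (hcal₁ : μ[Y | MeasurableSpace.comap X₁ Real.measurableSpace] =ᵐ[μ] X₁)
    (hcal₂ : μ[Y | MeasurableSpace.comap X₂ Real.measurableSpace] =ᵐ[μ] X₂) :
    ∀ θ : ℝ, 0 ≤ θ →
      ((∫ ω, elemLoss θ (Y ω) (X₁ ω) ∂μ) - ∫ ω, elemLoss θ (Y ω) (X₂ ω) ∂μ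
          = (∫ ω, max (X₂ ω - θ) 0 ∂μ) - ∫ ω, max (X₁ ω - θ) 0 ∂μ)
      ∧ ((∫ ω, max (X₂ ω - θ) 0 ∂μ) - ∫ ω, max (X₁ ω - θ) 0 ∂μ
          = -∫ x in (0:ℝ)..θ, (cdf' μ X₁ x - cdf' μ X₂ x)) := by
  intro θ hθ
  constructor
  · rw [integral_elemLoss_of_condExp_comap_ae_eq hX₁ hY hX₁int hcal₁ θ,
      integral_elemLoss_of_condExp_comap_ae_eq hX₂ hY hX₂int hcal₂ θ]
    ring
  · rw [integral_max_sub_zero_eq μ hX₁ hX₁int hX₁0 hθ, integral_max_sub_zero_eq μ hX₂ hX₂int hX₂0 hθ,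
      intervalIntegral.integral_sub (monotone_cdf'_s10 μ X₁).intervalIntegrable
        (monotone_cdf'_s10 μ X₂).intervalIntegrable,
      integral_eq_of_condExp_comap_ae_eq hX₁ hcal₁, integral_eq_of_condExp_comap_ae_eq hX₂ hcal₂]
    ring

/-- Murphy-curve difference of two mean-calibrated predictors:
`E[L_θ(Y,X₁)] − E[L_θ(Y,X₂)] = E[(X₂−θ)⁺] − E[(X₁−θ)⁺]
  = −∫₀^θ (F_{X₁}(x) − F_{X₂}(x)) dx` for all `θ ≥ 0`. -/
theorem murphy_difference_of_mean_calibrated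
    {Ω : Type*} {m0 : MeasurableSpace Ω} (μ : Measure Ω) [IsProbabilityMeasure μ]
    (Y X₁ X₂ : Ω → ℝ) (hX₁ : Measurable X₁) (hX₂ : Measurable X₂)
    (hY : Integrable Y μ) (hX₁int : Integrable X₁ μ) (hX₂int : Integrable X₂ μ)
    (hX₁0 : 0 ≤ᵐ[μ] X₁) (hX₂0 : 0 ≤ᵐ[μ] X₂)
    (hcal₁ : μ[Y | MeasurableSpace.comap X₁ Real.measurableSpace] =ᵐ[μ] X₁)
    (hcal₂ : μ[Y | MeasurableSpace.comap X₂ Real.measurableSpace] =ᵐ[μ] X₂)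
    (hmean₁ : ∫ ω, X₁ ω ∂μ = ∫ ω, Y ω ∂μ)
    (hmean₂ : ∫ ω, X₂ ω ∂μ = ∫ ω, Y ω ∂μ) :
    ∀ θ : ℝ, 0 ≤ θ →
      ((∫ ω, elemLoss θ (Y ω) (X₁ ω) ∂μ) - ∫ ω, elemLoss θ (Y ω) (X₂ ω) ∂μ
          = (∫ ω, max (X₂ ω - θ) 0 ∂μ) - ∫ ω, max (X₁ ω - θ) 0 ∂μ)
      ∧ ((∫ ω, max (X₂ ω - θ) 0 ∂μ) - ∫ ω, max (X₁ ω - θ) 0 ∂μ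
          = -∫ x in (0:ℝ)..θ, (cdf' μ X₁ x - cdf' μ X₂ x)) :=
  murphy_difference_of_mean_calibrated_general (m0 := m0) μ Y X₁ X₂ hX₁ hX₂ hY hX₁int hX₂int hX₁0
    hX₂0 hcal₁ hcal₂
end
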